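/- For every n ≥ 1, the difference formula β_{n,λ}^{(p)}(x+1) - β_{n,λ}^{(p)}(x) = Σ_{k=0}^{n-1} C(n,k) β_{k,λ}^{(p)}(x) (1)_{n-k,λ} holds. -/

import Mathlib

open Finset PowerSeries

noncomputable section

/-- The generalized (degenerate) falling factorial `(x)_{n,λ} = ∏_{j<n} (x - jλ)`. -/
def dfall (x : ℝ) (n : ℕ) (lam : ℝ) : ℝ := ∏ j ∈ Finset.range n, (x - j * lam)

/-- The degenerate exponential `e_λ^x(t) = Σ_{n≥0} (x)_{n,λ} t^n / n!` as a formal power series. -/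
def degExp (lam x : ℝ) : PowerSeries ℝ :=
  PowerSeries.mk fun n => dfall x n lam / n.factorial

/-- The degenerate Stirling numbers of the second kind, defined by
`(1/k!)(e_λ(t)-1)^k = Σ_{n≥k} S_{2,λ}(n,k) t^n/n!`. -/
def S2 (lam : ℝ) (n k : ℕ) : ℝ :=
  (n.factorial : ℝ) / (k.factorial : ℝ) * PowerSeries.coeff n ((degExp lam 1 - 1) ^ k)

/-- The degenerate Stirling polynomials of the second kind, defined by
`(1/k!)(e_λ(t)-1)^k e_λ^x(t) = Σ_{n≥k} S_{2,λ}(n,k|x) t^n/n!`. -/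
def S2p (lam : ℝ) (n k : ℕ) (x : ℝ) : ℝ :=
  (n.factorial : ℝ) / (k.factorial : ℝ) *
    PowerSeries.coeff n ((degExp lam 1 - 1) ^ k * degExp lam x)

/-- The degenerate logarithm `log_λ(1+t) = Σ_{n≥1} λ^{n-1}(1)_{n,1/λ} t^n/n!`. -/
def degLog (lam : ℝ) : PowerSeries ℝ :=
  PowerSeries.mk fun n => if n = 0 then 0 else lam ^ (n - 1) * dfall 1 n (1 / lam) / n.factorial

/-- The degenerate Stirling numbers of the first kind, defined by
`(1/k!)(log_λ(1+t))^k = Σ_{n≥k} S_{1,λ}(n,k) t^n/n!`. -/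
def S1 (lam : ℝ) (n k : ℕ) : ℝ :=
  (n.factorial : ℝ) / (k.factorial : ℝ) * PowerSeries.coeff n ((degLog lam) ^ k)

/-- Rising factorial `⟨a⟩_k = a(a+1)⋯(a+k-1)`. -/
def rising (a : ℝ) (k : ℕ) : ℝ := ∏ j ∈ Finset.range k, (a + j)

/-- The generalized degenerate Bernoulli polynomials `β_{n,λ}^{(p)}(x)`, defined by
`Σ_{n≥0} β_{n,λ}^{(p)}(x) t^n/n! = ₂F₁(1-λ,1;p+2;1-e_λ(t)) e_λ^x(t)`.
Since `1 - e_λ(t)` has zero constant term, the coefficient of `t^n` in the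
hypergeometric series only involves the terms with `k ≤ n`. -/
def genBetaPoly (lam : ℝ) (p : ℤ) (x : ℝ) (n : ℕ) : ℝ :=
  (n.factorial : ℝ) * PowerSeries.coeff n
    ((∑ k ∈ Finset.range (n + 1),
        (rising (1 - lam) k * rising 1 k / (rising ((p : ℝ) + 2) k * k.factorial)) •
          ((1 - degExp lam 1) ^ k)) * degExp lam x)

/-- The generalized degenerate Bernoulli numbers `β_{n,λ}^{(p)} = β_{n,λ}^{(p)}(0)`. -/
def genBeta (lam : ℝ) (p : ℤ) (n : ℕ) : ℝ := genBetaPoly lam p 0 n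

/-- The degenerate type Eulerian numbers, defined by
`(-1)^{n-m} A_λ(n,m) = Σ_{k=0}^{n-m} λ^k (1)_{k+1,1/λ} C(n-k,m) S_{2,λ}(n,k)`. -/
def Eul (lam : ℝ) (n m : ℕ) : ℝ :=
  (-1 : ℝ) ^ (n - m) * ∑ k ∈ Finset.range (n - m + 1),
    lam ^ k * dfall 1 (k + 1) (1 / lam) * ((n - k).choose m : ℝ) * S2 lam n k

/-! Since `e_λ^{x+1}(t) = e_λ^x(t) e_λ(t)` (a binomial theorem for degenerate falling factorials),
the generating function of `β_{n,λ}^{(p)}(x+1) - β_{n,λ}^{(p)}(x)` is that of `β_{n,λ}^{(p)}(x)` times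
`e_λ(t) - 1`. Comparing coefficients of `t^n` in this product of exponential generating functions
gives the formula; the term `k = n` drops out because `e_λ(t) - 1` has no constant term. -/

lemma dfall_succ (x : ℝ) (n : ℕ) (lam : ℝ) :
    dfall x (n + 1) lam = dfall x n lam * (x - n * lam) :=
  prod_range_succ _ _

lemma dfall_add (x y : ℝ) (n : ℕ) (lam : ℝ) :
    dfall (x + y) n lam =
      ∑ ij ∈ antidiagonal n, (n.choose ij.1 : ℝ) * (dfall x ij.1 lam * dfall y ij.2 lam) := by
  induction n with
  | zero => simp [dfall]
  | succ n ih =>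
    rw [sum_antidiagonal_choose_succ_mul (fun i j => dfall x i lam * dfall y j lam),
      ← sum_add_distrib, dfall_succ, ih, sum_mul]
    refine sum_congr rfl fun ⟨i, j⟩ hij => ?_
    obtain rfl : i + j = n := mem_antidiagonal.mp hij
    rw [Nat.choose_symm_add, dfall_succ, dfall_succ]
    push_cast
    ring

lemma factorial_mul_coeff_mul (f g : PowerSeries ℝ) (n : ℕ) :
    (n.factorial : ℝ) * coeff n (f * g) =
      ∑ ij ∈ antidiagonal n, (n.choose ij.1 : ℝ) *
        ((ij.1.factorial * coeff ij.1 f) * (ij.2.factorial * coeff ij.2 g)) := by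
  rw [coeff_mul, mul_sum]
  refine sum_congr rfl fun ij hij => ?_
  rw [← mem_antidiagonal.mp hij, Nat.cast_add_choose]
  field_simp

lemma factorial_mul_coeff_degExp (lam x : ℝ) (n : ℕ) :
    (n.factorial : ℝ) * coeff n (degExp lam x) = dfall x n lam := by
  rw [degExp, coeff_mk]
  field_simp

lemma degExp_add (lam x y : ℝ) : degExp lam (x + y) = degExp lam x * degExp lam y := by
  ext n
  refine mul_left_cancel₀ (Nat.cast_ne_zero.mpr n.factorial_ne_zero) ?_
  simp only [factorial_mul_coeff_mul, factorial_mul_coeff_degExp, dfall_add]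

lemma constantCoeff_degExp (lam x : ℝ) : constantCoeff (degExp lam x) = 1 := by
  simp [← coeff_zero_eq_constantCoeff_apply, degExp, dfall]

lemma coeff_zero_degExp_sub_one (lam x : ℝ) : coeff 0 (degExp lam x - 1) = 0 := by
  rw [coeff_zero_eq_constantCoeff_apply, map_sub, constantCoeff_degExp, map_one, sub_self]

lemma factorial_mul_coeff_degExp_sub_one (lam x : ℝ) {m : ℕ} (hm : m ≠ 0) :
    (m.factorial : ℝ) * coeff m (degExp lam x - 1) = dfall x m lam := by
  rw [map_sub, coeff_one, if_neg hm, sub_zero, factorial_mul_coeff_degExp]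

lemma coeff_sum_smul_pow_mul_of_le {R : Type*} [CommRing R] {u : PowerSeries R}
    (hu : constantCoeff u = 0) (c : ℕ → R) (G : PowerSeries R) {m N : ℕ} (h : m ≤ N) :
    coeff m ((∑ k ∈ range (N + 1), c k • u ^ k) * G) =
      coeff m ((∑ k ∈ range (m + 1), c k • u ^ k) * G) := by
  have htail : ∀ k ∈ Ico (m + 1) (N + 1), coeff m ((c k • u ^ k) * G) = 0 := by
    intro k hk
    have hdvd : X ^ k ∣ u ^ k * G := (pow_dvd_pow_of_dvd (X_dvd_iff.mpr hu) k).mul_right G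
    rw [smul_mul_assoc, map_smul, X_pow_dvd_iff.mp hdvd m (mem_Ico.mp hk).1, smul_zero]
  rw [← sum_range_add_sum_Ico _ (by omega : m + 1 ≤ N + 1), add_mul, map_add, add_eq_left,
    sum_mul, map_sum]
  exact sum_eq_zero htail

def degHypTrunc (lam : ℝ) (p : ℤ) (N : ℕ) : PowerSeries ℝ :=
  ∑ k ∈ range (N + 1),
    (rising (1 - lam) k * rising 1 k / (rising ((p : ℝ) + 2) k * k.factorial)) •
      ((1 - degExp lam 1) ^ k)

lemma genBetaPoly_eq_of_le (lam : ℝ) (p : ℤ) (x : ℝ) {k N : ℕ} (h : k ≤ N) :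
    genBetaPoly lam p x k =
      (k.factorial : ℝ) * coeff k (degHypTrunc lam p N * degExp lam x) := by
  have hu : constantCoeff (1 - degExp lam 1) = 0 := by
    rw [map_sub, map_one, constantCoeff_degExp, sub_self]
  rw [degHypTrunc, coeff_sum_smul_pow_mul_of_le hu _ _ h]
  rfl

theorem stmt18_general (lam : ℝ) (p : ℤ) (x : ℝ) (n : ℕ) :
    genBetaPoly lam p (x + 1) n - genBetaPoly lam p x n =
      ∑ k ∈ Finset.range n,
        (n.choose k : ℝ) * genBetaPoly lam p x k * dfall 1 (n - k) lam := by
  have hdiff : genBetaPoly lam p (x + 1) n - genBetaPoly lam p x n =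
      (n.factorial : ℝ) * coeff n ((degHypTrunc lam p n * degExp lam x) * (degExp lam 1 - 1)) := by
    rw [genBetaPoly_eq_of_le lam p _ le_rfl, genBetaPoly_eq_of_le lam p _ le_rfl, degExp_add,
      ← mul_sub, ← map_sub, mul_sub, mul_one, mul_assoc]
  rw [hdiff, factorial_mul_coeff_mul, Nat.sum_antidiagonal_eq_sum_range_succ_mk, sum_range_succ,
    Nat.sub_self, coeff_zero_degExp_sub_one, mul_zero, mul_zero, mul_zero, add_zero]
  refine sum_congr rfl fun k hk => ?_
  have hkn : k < n := mem_range.mp hk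
  rw [factorial_mul_coeff_degExp_sub_one lam 1 (by omega), ← genBetaPoly_eq_of_le lam p x hkn.le,
    mul_assoc]

theorem stmt18 (lam : ℝ) (p : ℤ) (hp : -1 ≤ p) (x : ℝ) (n : ℕ) (hn : 1 ≤ n) :
    genBetaPoly lam p (x + 1) n - genBetaPoly lam p x n =
      ∑ k ∈ Finset.range n,
        (n.choose k : ℝ) * genBetaPoly lam p x k * dfall 1 (n - k) lam :=
  stmt18_general lam p x n
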